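/- Let i, j ∈ {1,…,R} and suppose that α(m,i) · γ(m,j) = 0 for all m ∈ {1,…,M} (no species of the reactant complex of step i participates in step j except as a direct catalyst). Then for every x ∈ ℝ^M, [g_i, g_j](x) = κ_{j,i}(x) · x^{α(·,i)} • γ(·,j). (Lemma 3, case 3.) -/
import Mathlib


/-- The vector field of the `r`-th reaction step: `g_r(x) = x^{α(·,r)} • γ(·,r)`. -/
noncomputable def reactionVF (M R : ℕ) (α : Fin M → Fin R → ℕ)
    (γ : Matrix (Fin M) (Fin R) ℝ) (r : Fin R) (x : Fin M → ℝ) : Fin M → ℝ :=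
  (∏ m, x m ^ α m r) • fun m => γ m r

/-- The Lie bracket of two vector fields on `ℝ^M`:
`[φ,ψ](x) = Dψ(x)(φ(x)) − Dφ(x)(ψ(x))`. -/
noncomputable def lieBracket {M : ℕ} (φ ψ : (Fin M → ℝ) → (Fin M → ℝ))
    (x : Fin M → ℝ) : Fin M → ℝ :=
  fderiv ℝ ψ x (φ x) - fderiv ℝ φ x (ψ x)

/-- `d_m^i(x) = 0` if `α(m,i) = 0`, and `d_m^i(x) = x^{α(·,i) − e_m}` otherwise. -/
noncomputable def dmi (M R : ℕ) (α : Fin M → Fin R → ℕ) (i : Fin R) (m : Fin M)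
    (x : Fin M → ℝ) : ℝ :=
  if α m i = 0 then 0 else ∏ l, x l ^ (α l i - if l = m then 1 else 0)

/-- `κ_{i,j}(x) = ∑_m α(m,i) γ(m,j) d_m^i(x)`. -/
noncomputable def kappa (M R : ℕ) (α : Fin M → Fin R → ℕ)
    (γ : Matrix (Fin M) (Fin R) ℝ) (i j : Fin R) (x : Fin M → ℝ) : ℝ :=
  ∑ m, (α m i : ℝ) * γ m j * dmi M R α i m x

lemma hasFDerivAt_monomial (M R : ℕ) (α : Fin M → Fin R → ℕ) (r : Fin R)
    (x : Fin M → ℝ) :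
    HasFDerivAt (fun y : Fin M → ℝ => ∏ m, y m ^ α m r)
      (∑ m, ((α m r : ℝ) * dmi M R α r m x) •
        (ContinuousLinearMap.proj m : (Fin M → ℝ) →L[ℝ] ℝ)) x := by
  have h : ∀ m ∈ Finset.univ, HasFDerivAt (fun y : Fin M → ℝ => y m ^ α m r)
      (((α m r : ℝ) * x m ^ (α m r - 1)) •
        (ContinuousLinearMap.proj m : (Fin M → ℝ) →L[ℝ] ℝ)) x := by
    intro m _
    exact (hasDerivAt_pow (α m r) (x m)).comp_hasFDerivAt x (hasFDerivAt_apply m x)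
  refine (HasFDerivAt.finset_prod h).congr_fderiv ?_
  refine Finset.sum_congr rfl fun m _ => ?_
  rw [smul_smul]
  congr 1
  rcases eq_or_ne (α m r) 0 with h0 | h0
  · simp [dmi, h0]
  · have hprod : (∏ l, x l ^ (α l r - if l = m then 1 else 0)) =
        x m ^ (α m r - 1) * ∏ l ∈ Finset.univ.erase m, x l ^ α l r := by
      rw [← Finset.mul_prod_erase Finset.univ _ (Finset.mem_univ m), if_pos rfl]
      congr 1
      exact Finset.prod_congr rfl fun l hl => by
        rw [if_neg (Finset.ne_of_mem_erase hl), Nat.sub_zero]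
    rw [dmi, if_neg h0, hprod]
    ring

lemma hasFDerivAt_reactionVF (M R : ℕ) (α : Fin M → Fin R → ℕ)
    (γ : Matrix (Fin M) (Fin R) ℝ) (r : Fin R) (x : Fin M → ℝ) :
    HasFDerivAt (reactionVF M R α γ r)
      ((∑ m, ((α m r : ℝ) * dmi M R α r m x) •
        (ContinuousLinearMap.proj m : (Fin M → ℝ) →L[ℝ] ℝ)).smulRight
          (fun m => γ m r : Fin M → ℝ)) x :=
  (hasFDerivAt_monomial M R α r x).smul_const _

/-- Lemma 3, case 3: if no species of the reactant complex of step `i`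
participates in step `j` except as a direct catalyst, then
`[g_i, g_j](x) = κ_{j,i}(x) x^{α(·,i)} • γ(·,j)`. -/
theorem lieBracket_reactionVF_case3 (M R : ℕ) (α : Fin M → Fin R → ℕ)
    (γ : Matrix (Fin M) (Fin R) ℝ) (i j : Fin R)
    (hij : ∀ m, (α m i : ℝ) * γ m j = 0) :
    ∀ x : Fin M → ℝ,
      lieBracket (reactionVF M R α γ i) (reactionVF M R α γ j) x =
        (kappa M R α γ j i x * ∏ m, x m ^ α m i) • (fun m => γ m j : Fin M → ℝ) := by
  intro x
  rw [lieBracket, (hasFDerivAt_reactionVF M R α γ i x).fderiv,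
    (hasFDerivAt_reactionVF M R α γ j x).fderiv]
  simp only [ContinuousLinearMap.smulRight_apply, ContinuousLinearMap.sum_apply,
    ContinuousLinearMap.smul_apply, ContinuousLinearMap.proj_apply, reactionVF,
    Pi.smul_apply, smul_eq_mul]
  have hzero : (∑ m, (α m i : ℝ) * dmi M R α i m x *
      ((∏ m, x m ^ α m j) * γ m j)) = 0 := by
    apply Finset.sum_eq_zero
    intro m _
    rcases eq_or_ne (α m i) 0 with h0 | h0
    · simp [dmi, h0]
    · have : γ m j = 0 := by
        have := hij m
        have hne : (α m i : ℝ) ≠ 0 := Nat.cast_ne_zero.mpr h0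
        exact (mul_eq_zero.mp this).resolve_left hne
      simp [this]
  have hk : (∑ m, (α m j : ℝ) * dmi M R α j m x *
      ((∏ m, x m ^ α m i) * γ m i)) = kappa M R α γ j i x * ∏ m, x m ^ α m i := by
    rw [kappa, Finset.sum_mul]
    refine Finset.sum_congr rfl fun m _ => ?_
    ring
  rw [hzero, hk, zero_smul, sub_zero]
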